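/- In the coset-coding wiretap channel with noiseless main channel and BSC eavesdropper channel with crossover probability δ, the conditional information leakage L(z^n) = H(S^m) - H(S^m | Z^n = z^n) is the same for every z^n ∈ F_2^n and equals m - H(A·V^n). -/

import Mathlib

open Finset

/-- Shannon entropy in bits of a pmf on a finite type. -/
noncomputable def ent {α : Type*} [Fintype α] (p : α → ℝ) : ℝ :=
  -∑ a, p a * Real.logb 2 (p a)

/-- pmf of an i.i.d. Bernoulli(δ) noise vector over `F_2`. -/
def noisePMF (δ : ℝ) {ι : Type*} [Fintype ι] (v : ι → ZMod 2) : ℝ :=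
  ∏ i, if v i = 1 then δ else 1 - δ

/-- Coset-coding codeword `X^n = (S^m ⊕ A_2·U^{n-m}, U^{n-m})`. -/
def codeword {m k : ℕ} (A2 : Matrix (Fin m) (Fin k) (ZMod 2))
    (s : Fin m → ZMod 2) (u : Fin k → ZMod 2) : (Fin m ⊕ Fin k) → ZMod 2 :=
  Sum.elim (fun j => s j + A2.mulVec u j) u

/-- The parity check matrix `A = [I_m | A_2]`. -/
def pcheck {m k : ℕ} (A2 : Matrix (Fin m) (Fin k) (ZMod 2)) :
    Matrix (Fin m) (Fin m ⊕ Fin k) (ZMod 2) :=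
  Matrix.of fun j => Sum.elim (fun j' => if j = j' then 1 else 0) (fun i => A2 j i)

/-- Joint pmf of the uniform secret `S^m` and Eve's observation `Z^n = X^n ⊕ V^n`
for the coset-coding scheme with BSC(δ) noise `V^n`. -/
noncomputable def pSZ {m k : ℕ} (δ : ℝ) (A2 : Matrix (Fin m) (Fin k) (ZMod 2))
    (s : Fin m → ZMod 2) (z : (Fin m ⊕ Fin k) → ZMod 2) : ℝ :=
  ∑ u : Fin k → ZMod 2, ∑ v : (Fin m ⊕ Fin k) → ZMod 2,
    (1 / 2 ^ m) * (1 / 2 ^ k) * noisePMF δ v *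
      (if z = codeword A2 s u + v then 1 else 0)

/-- pmf of `A·V^n`. -/
noncomputable def pAV {m k : ℕ} (δ : ℝ) (A2 : Matrix (Fin m) (Fin k) (ZMod 2))
    (x : Fin m → ZMod 2) : ℝ :=
  ∑ v : (Fin m ⊕ Fin k) → ZMod 2,
    noisePMF δ v * (if (pcheck A2).mulVec v = x then 1 else 0)

/- ------------- auxiliary lemmas ------------- -/

lemma two_add {α : Type*} (a b : α → ZMod 2) : a + b + b = a := by
  funext x
  show a x + b x + b x = a x
  generalize a x = p; generalize b x = q; revert p q; decide

lemma two_add' {α : Type*} (a b : α → ZMod 2) : a + (a + b) = b := by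
  funext x
  show a x + (a x + b x) = b x
  generalize a x = p; generalize b x = q; revert p q; decide

lemma noise_sum {ι : Type*} [Fintype ι] [DecidableEq ι] (δ : ℝ) :
    ∑ v : ι → ZMod 2, noisePMF δ v = 1 := by
  unfold noisePMF
  have h : ∑ v : ι → ZMod 2, ∏ i, (if v i = 1 then δ else 1 - δ)
      = ∏ i : ι, ∑ a : ZMod 2, (if a = 1 then δ else 1 - δ) := by
    rw [Finset.prod_univ_sum, Fintype.piFinset_univ]
  rw [h]
  have h2 : ∑ a : ZMod 2, (if a = 1 then δ else 1 - δ) = 1 := by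
    have hu : (univ : Finset (ZMod 2)) = {0, 1} := by decide
    rw [hu, Finset.sum_insert (by decide), Finset.sum_singleton]
    norm_num
  rw [h2, Finset.prod_const_one]

lemma pcheck_mulVec {m k : ℕ} (A2 : Matrix (Fin m) (Fin k) (ZMod 2))
    (w : (Fin m ⊕ Fin k) → ZMod 2) (j : Fin m) :
    (pcheck A2).mulVec w j = w (Sum.inl j) + A2.mulVec (w ∘ Sum.inr) j := by
  simp [pcheck, Matrix.mulVec, dotProduct, Fintype.sum_sum_type, ite_mul,
    Finset.sum_ite_eq, Function.comp]

lemma eq_codeword_iff {m k : ℕ} (A2 : Matrix (Fin m) (Fin k) (ZMod 2))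
    (s : Fin m → ZMod 2) (w : (Fin m ⊕ Fin k) → ZMod 2) (u : Fin k → ZMod 2) :
    w = codeword A2 s u ↔ (pcheck A2).mulVec w = s ∧ u = w ∘ Sum.inr := by
  constructor
  · rintro rfl
    refine ⟨funext fun j => ?_, rfl⟩
    rw [pcheck_mulVec]
    have hcomp : (codeword A2 s u) ∘ Sum.inr = u := rfl
    rw [hcomp]
    show s j + A2.mulVec u j + A2.mulVec u j = s j
    generalize s j = p; generalize A2.mulVec u j = q; revert p q; decide
  · rintro ⟨h1, rfl⟩
    funext x
    cases x with
    | inl j =>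
        have hj := congrFun h1 j
        rw [pcheck_mulVec] at hj
        show w (Sum.inl j) = s j + A2.mulVec (w ∘ Sum.inr) j
        rw [← hj]
        generalize w (Sum.inl j) = p; generalize A2.mulVec (w ∘ Sum.inr) j = q
        revert p q; decide
    | inr i => rfl

lemma sum_indicator {m k : ℕ} (A2 : Matrix (Fin m) (Fin k) (ZMod 2))
    (s : Fin m → ZMod 2) (w : (Fin m ⊕ Fin k) → ZMod 2) :
    (∑ u : Fin k → ZMod 2, if w = codeword A2 s u then (1:ℝ) else 0)
      = if (pcheck A2).mulVec w = s then 1 else 0 := by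
  rw [Finset.sum_eq_single (w ∘ Sum.inr)]
  · by_cases h : (pcheck A2).mulVec w = s
    · rw [if_pos ((eq_codeword_iff A2 s w _).2 ⟨h, rfl⟩), if_pos h]
    · rw [if_neg, if_neg h]
      intro hc; exact h ((eq_codeword_iff A2 s w _).1 hc).1
  · intro u _ hu
    rw [if_neg]
    intro hc; exact hu ((eq_codeword_iff A2 s w u).1 hc).2
  · intro h; exact absurd (Finset.mem_univ _) h

lemma pAV_sum {m k : ℕ} (δ : ℝ) (A2 : Matrix (Fin m) (Fin k) (ZMod 2)) :
    ∑ x : Fin m → ZMod 2, pAV δ A2 x = 1 := by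
  unfold pAV
  rw [Finset.sum_comm]
  have h : ∀ v : (Fin m ⊕ Fin k) → ZMod 2,
      ∑ x : Fin m → ZMod 2, noisePMF δ v * (if (pcheck A2).mulVec v = x then (1:ℝ) else 0)
        = noisePMF δ v := by
    intro v
    rw [← Finset.mul_sum, Finset.sum_ite_eq, if_pos (Finset.mem_univ _), mul_one]
  rw [Finset.sum_congr rfl fun v _ => h v, noise_sum]

lemma pSZ_eq {m k : ℕ} (δ : ℝ) (A2 : Matrix (Fin m) (Fin k) (ZMod 2))
    (s : Fin m → ZMod 2) (z : (Fin m ⊕ Fin k) → ZMod 2) :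
    pSZ δ A2 s z = 1 / 2 ^ (m + k) * pAV δ A2 ((pcheck A2).mulVec z + s) := by
  unfold pSZ pAV
  rw [Finset.sum_comm, Finset.mul_sum]
  refine Finset.sum_congr rfl fun v _ => ?_
  have hiff : ∀ u, (z = codeword A2 s u + v) ↔ (z + v = codeword A2 s u) := by
    intro u
    constructor
    · intro h; rw [h]; exact two_add _ _
    · intro h; rw [← h]; exact (two_add z v).symm
  have h1 : ∑ u : Fin k → ZMod 2,
      (1 / 2 ^ m) * (1 / 2 ^ k) * noisePMF δ v * (if z = codeword A2 s u + v then (1:ℝ) else 0)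
      = (1 / 2 ^ m) * (1 / 2 ^ k) * noisePMF δ v *
        (if (pcheck A2).mulVec (z + v) = s then 1 else 0) := by
    rw [← Finset.mul_sum]
    congr 1
    rw [Finset.sum_congr rfl fun u _ => if_congr (hiff u) rfl rfl]
    exact sum_indicator A2 s (z + v)
  rw [h1]
  have h2 : ((pcheck A2).mulVec (z + v) = s)
      ↔ ((pcheck A2).mulVec v = (pcheck A2).mulVec z + s) := by
    rw [Matrix.mulVec_add]
    constructor
    · intro h; rw [← h]; exact (two_add' _ _).symm
    · intro h; rw [h]; exact two_add' _ _
  rw [if_congr h2 rfl rfl, pow_add]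
  ring

lemma pSZ_marg {m k : ℕ} (δ : ℝ) (A2 : Matrix (Fin m) (Fin k) (ZMod 2))
    (s : Fin m → ZMod 2) :
    ∑ z : (Fin m ⊕ Fin k) → ZMod 2, pSZ δ A2 s z = 1 / 2 ^ m := by
  unfold pSZ
  rw [Finset.sum_comm]
  have h : ∀ u : Fin k → ZMod 2,
      ∑ z : (Fin m ⊕ Fin k) → ZMod 2, ∑ v : (Fin m ⊕ Fin k) → ZMod 2,
        (1 / 2 ^ m) * (1 / 2 ^ k) * noisePMF δ v *
          (if z = codeword A2 s u + v then (1:ℝ) else 0)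
      = (1 / 2 ^ m) * (1 / 2 ^ k) := by
    intro u
    rw [Finset.sum_comm]
    have h2 : ∀ v : (Fin m ⊕ Fin k) → ZMod 2,
        ∑ z : (Fin m ⊕ Fin k) → ZMod 2,
          (1 / 2 ^ m) * (1 / 2 ^ k) * noisePMF δ v *
            (if z = codeword A2 s u + v then (1:ℝ) else 0)
        = (1 / 2 ^ m) * (1 / 2 ^ k) * noisePMF δ v := by
      intro v
      rw [← Finset.mul_sum, Finset.sum_ite_eq', if_pos (Finset.mem_univ _), mul_one]
    rw [Finset.sum_congr rfl fun v _ => h2 v, ← Finset.mul_sum, noise_sum, mul_one]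
  rw [Finset.sum_congr rfl fun u _ => h u, Finset.sum_const, Finset.card_univ]
  have hc : Fintype.card (Fin k → ZMod 2) = 2 ^ k := by simp
  rw [hc, nsmul_eq_mul]
  have h2 : ((2:ℝ) ^ k) ≠ 0 := by positivity
  push_cast
  field_simp

lemma ent_unif (m : ℕ) : ent (fun _ : Fin m → ZMod 2 => (1 / 2 ^ m : ℝ)) = m := by
  unfold ent
  rw [Finset.sum_const, Finset.card_univ]
  have hc : Fintype.card (Fin m → ZMod 2) = 2 ^ m := by simp
  have hl : Real.logb 2 ((1:ℝ) / 2 ^ m) = -(m:ℝ) := by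
    rw [one_div, Real.logb_inv, Real.logb_pow]
    simp [Real.logb_self_eq_one]
  rw [hc, hl, nsmul_eq_mul]
  have h2 : ((2:ℝ) ^ m) ≠ 0 := by positivity
  push_cast
  field_simp

lemma ent_shift {m : ℕ} (p : (Fin m → ZMod 2) → ℝ) (c : Fin m → ZMod 2) :
    ent (fun s => p (c + s)) = ent p := by
  unfold ent
  congr 1
  exact Equiv.sum_comp (Equiv.addLeft c) (fun a => p a * Real.logb 2 (p a))

/-- Theorem 4: when Eve's channel is a BSC, the conditional information leakage
`L(z^n) = H(S^m) - H(S^m | Z^n = z^n)` is the same for every `z^n` and equals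
`m - H(A·V^n)`. -/
theorem stmt6 {m k : ℕ} (δ : ℝ) (hδ0 : 0 ≤ δ) (hδ1 : δ ≤ 1)
    (A2 : Matrix (Fin m) (Fin k) (ZMod 2)) :
    ∀ z : (Fin m ⊕ Fin k) → ZMod 2,
      ent (fun s => ∑ z', pSZ δ A2 s z')
          - ent (fun s => pSZ δ A2 s z / ∑ s', pSZ δ A2 s' z)
        = (m : ℝ) - ent (pAV δ A2) := by
  intro z
  have h1 : (fun s : Fin m → ZMod 2 => ∑ z', pSZ δ A2 s z')
      = fun _ => (1 / 2 ^ m : ℝ) := funext fun s => pSZ_marg δ A2 s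
  have hsum : ∑ s', pSZ δ A2 s' z = 1 / 2 ^ (m + k) := by
    simp only [pSZ_eq δ A2 _ z]
    have he : ∑ i : Fin m → ZMod 2, pAV δ A2 ((pcheck A2).mulVec z + i)
        = ∑ x, pAV δ A2 x :=
      Equiv.sum_comp (Equiv.addLeft ((pcheck A2).mulVec z)) (pAV δ A2)
    rw [← Finset.mul_sum, he, pAV_sum, mul_one]
  have hcne : (1 / 2 ^ (m + k) : ℝ) ≠ 0 := by positivity
  have h2 : (fun s : Fin m → ZMod 2 => pSZ δ A2 s z / ∑ s', pSZ δ A2 s' z)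
      = fun s => pAV δ A2 ((pcheck A2).mulVec z + s) := by
    funext s
    rw [hsum, pSZ_eq δ A2 s z, mul_div_cancel_left₀ _ hcne]
  rw [h1, h2, ent_unif, ent_shift]
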